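/- arXiv:2401.11803 — 5 statements merged into one kernel-verified Lean document; each statement's English description precedes it below -/
import Mathlib

section
/- If χ: [a,b] → [0,∞) is C¹ with χ(a)=0, χ(b)=1, and sup_{t∈[a,b]}(χ'(t)² − A²χ(t)²) < A²/sinh²(A(b−a)) where A > 0, then there exists δ > 0 such that χ(t) < sinh(A(t−a))/sinh(A(b−a)) for all t ∈ (a, a+δ]. -/
/-!
Let `χ₀ t = sinh (A (t - a)) / sinh (A (b - a))`. At `t = a` the functional `χ'² - A² χ²`
reduces to `χ'(a)²`, so the bound on its supremum forces `χ'(a) < A / sinh (A (b - a)) = χ₀'(a)`.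
As `χ` and `χ₀` both vanish at `a`, this gives `χ < χ₀` just to the right of `a`.
-/

open Filter Set Topology

theorem eventually_nhdsGT_lt_of_hasDerivAt_lt {f g : ℝ → ℝ} {f' g' a : ℝ}
    (hf : HasDerivAt f f' a) (hg : HasDerivAt g g' a) (hfg : f a ≤ g a) (hlt : f' < g') :
    ∀ᶠ t in 𝓝[>] a, f t < g t := by
  have hslope : Tendsto (slope (g - f) a) (𝓝[>] a) (𝓝 (g' - f')) :=
    (hg.sub hf).tendsto_slope.mono_left (nhdsGT_le_nhdsNE a)
  filter_upwards [hslope.eventually (eventually_gt_nhds (sub_pos.2 hlt)), self_mem_nhdsWithin]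
    with t ht_slope (ht : a < t)
  have := (slope_pos_iff ht).1 ht_slope
  simp only [Pi.sub_apply] at this
  linarith

theorem exists_forall_Ioc_of_eventually_nhdsGT {p : ℝ → Prop} {a b : ℝ}
    (h : ∀ᶠ t in 𝓝[>] a, p t) (hab : a < b) :
    ∃ δ > 0, a + δ ≤ b ∧ ∀ t ∈ Ioc a (a + δ), p t := by
  obtain ⟨u, hu, hsub⟩ := mem_nhdsGT_iff_exists_Ioc_subset.1 h
  refine ⟨min u b - a, sub_pos.2 (lt_min hu hab), by simp, fun t ht => hsub ?_⟩
  exact ⟨ht.1, by linarith [ht.2, min_le_left u b]⟩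

theorem hasDerivAt_sinh_mul_sub_div (A a c t : ℝ) :
    HasDerivAt (fun t => Real.sinh (A * (t - a)) / c) (A * Real.cosh (A * (t - a)) / c) t := by
  have hlin : HasDerivAt (fun t => A * (t - a)) A t := by
    simpa using ((hasDerivAt_id t).sub_const a).const_mul A
  simpa [mul_comm] using (hlin.sinh).div_const c

theorem stmt2_general (A a b : ℝ) (hA : 0 < A) (hab : a < b)
    (χ : ℝ → ℝ) (hχ : ContDiff ℝ 1 χ)
    (ha : χ a = 0)
    (hsup : sSup ((fun t => (deriv χ t) ^ 2 - A ^ 2 * (χ t) ^ 2) '' Set.Icc a b)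
      < A ^ 2 / Real.sinh (A * (b - a)) ^ 2) :
    ∃ δ > 0, a + δ ≤ b ∧ ∀ t ∈ Set.Ioc a (a + δ),
      χ t < Real.sinh (A * (t - a)) / Real.sinh (A * (b - a)) := by
  set s := Real.sinh (A * (b - a))
  have hs : 0 < s := Real.sinh_pos_iff.2 (mul_pos hA (sub_pos.2 hab))
  have hJ : Continuous fun t => (deriv χ t) ^ 2 - A ^ 2 * (χ t) ^ 2 := by
    have := hχ.continuous_deriv le_rfl
    have := hχ.continuous
    fun_prop
  have hJa : deriv χ a ^ 2 ≤ sSup ((fun t => (deriv χ t) ^ 2 - A ^ 2 * (χ t) ^ 2) '' Icc a b) :=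
    le_csSup (isCompact_Icc.bddAbove_image hJ.continuousOn)
      ⟨a, left_mem_Icc.2 hab.le, by simp [ha]⟩
  have hderiv : deriv χ a < A / s :=
    (abs_lt_of_sq_lt_sq' (by rw [div_pow]; exact hJa.trans_lt hsup) (by positivity)).2
  have hχ₀ := hasDerivAt_sinh_mul_sub_div A a s a
  simp only [sub_self, mul_zero, Real.cosh_zero, mul_one] at hχ₀
  refine exists_forall_Ioc_of_eventually_nhdsGT ?_ hab
  exact eventually_nhdsGT_lt_of_hasDerivAt_lt (hχ.differentiable one_ne_zero a).hasDerivAt hχ₀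
    (by simp [ha]) hderiv

theorem stmt2 (A a b : ℝ) (hA : 0 < A) (hab : a < b)
    (χ : ℝ → ℝ) (hχ : ContDiff ℝ 1 χ) (hpos : ∀ t ∈ Set.Icc a b, 0 ≤ χ t)
    (ha : χ a = 0) (hb : χ b = 1)
    (hsup : sSup ((fun t => (deriv χ t) ^ 2 - A ^ 2 * (χ t) ^ 2) '' Set.Icc a b)
      < A ^ 2 / Real.sinh (A * (b - a)) ^ 2) :
    ∃ δ > 0, a + δ ≤ b ∧ ∀ t ∈ Set.Ioc a (a + δ),
      χ t < Real.sinh (A * (t - a)) / Real.sinh (A * (b - a)) :=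
  stmt2_general A a b hA hab χ hχ ha hsup
end

section
/- The function g(t) = 1 − 1/(4 sinh²(t/4)) − 4/sinh²(t) is strictly increasing on (0,∞), with limit −∞ as t → 0⁺ and limit 1 as t → +∞; in particular there is a unique t₀ > 0 with g(t₀) = 0. -/
/-!
Both `1 / (4 sinh² (t / 4))` and `4 / sinh² t` are positive and strictly decreasing on `(0, ∞)`,
blow up as `t → 0⁺` and vanish as `t → ∞`. Hence `g` increases strictly from `-∞` to `1`, and the
intermediate value theorem together with injectivity yields the unique zero.
-/

open Filter Real Set Topology

lemma ContinuousAt.tendsto_nhdsGT {f : ℝ → ℝ} {a b : ℝ} (hf : ContinuousAt f a)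
    (hab : f a = b) (hmaps : MapsTo f (Ioi a) (Ioi b)) : Tendsto f (𝓝[>] a) (𝓝[>] b) := by
  simpa [hab] using hf.continuousWithinAt.tendsto_nhdsWithin hmaps

lemma tendsto_div_const_nhdsGT_zero {c : ℝ} (hc : 0 < c) :
    Tendsto (· / c : ℝ → ℝ) (𝓝[>] 0) (𝓝[>] 0) :=
  (continuous_id.div_const c).continuousAt.tendsto_nhdsGT (zero_div c)
    fun t ht => (div_pos ht hc : 0 < t / c)

lemma StrictMonoOn.existsUnique_eq_of_mem_Icc {α β : Type*} [LinearOrder α] [TopologicalSpace α]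
    [LinearOrder β] [TopologicalSpace β] [OrderClosedTopology β] {f : α → β} {s : Set α}
    (hs : IsPreconnected s) (hf : StrictMonoOn f s) (hc : ContinuousOn f s) {a b : α}
    (ha : a ∈ s) (hb : b ∈ s) {y : β} (hy : y ∈ Icc (f a) (f b)) : ∃! x, x ∈ s ∧ f x = y := by
  obtain ⟨x, hx, rfl⟩ := hs.intermediate_value ha hb hc hy
  exact ⟨x, ⟨hx, rfl⟩, fun x' ⟨hx', hfx'⟩ => hf.injOn hx' hx hfx'⟩

namespace Real

lemma tendsto_sinh_atTop : Tendsto sinh atTop atTop := sinhOrderIso.tendsto_atTop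

lemma tendsto_sinh_nhdsGT_zero : Tendsto sinh (𝓝[>] 0) (𝓝[>] 0) :=
  continuous_sinh.continuousAt.tendsto_nhdsGT sinh_zero fun _ => sinh_pos_iff.2

lemma strictAntiOn_div_sinh_sq {c : ℝ} (hc : 0 < c) :
    StrictAntiOn (fun t => c / sinh t ^ 2) (Ioi 0) := by
  intro a ha b _ hab
  have ha' : 0 < sinh a := sinh_pos_iff.2 ha
  have hsinh : sinh a < sinh b := sinh_lt_sinh.2 hab
  exact div_lt_div_of_pos_left hc (by positivity) (pow_lt_pow_left₀ hsinh ha'.le two_ne_zero)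

lemma tendsto_div_sinh_sq_nhdsGT_zero {c : ℝ} (hc : 0 < c) :
    Tendsto (fun t => c / sinh t ^ 2) (𝓝[>] 0) atTop := by
  have hsq : Tendsto (· ^ 2) (𝓝[>] (0 : ℝ)) (𝓝[>] 0) :=
    (continuous_pow 2).continuousAt.tendsto_nhdsGT (zero_pow two_ne_zero)
      fun t ht => (pow_pos ht 2 : 0 < t ^ 2)
  simpa [div_eq_mul_inv] using
    (hsq.comp tendsto_sinh_nhdsGT_zero).inv_tendsto_nhdsGT_zero.const_mul_atTop hc

lemma tendsto_div_sinh_sq_atTop (c : ℝ) :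
    Tendsto (fun t => c / sinh t ^ 2) atTop (𝓝 0) :=
  tendsto_const_nhds.div_atTop ((tendsto_pow_atTop two_ne_zero).comp tendsto_sinh_atTop)

lemma continuousOn_div_sinh_sq (c : ℝ) :
    ContinuousOn (fun t => c / sinh t ^ 2) (Ioi 0) :=
  continuousOn_const.div (continuous_sinh.pow 2).continuousOn
    fun _ ht => pow_ne_zero 2 (sinh_pos_iff.2 ht).ne'

end Real

noncomputable def sinhDefect (t : ℝ) : ℝ := 1 - 1 / (4 * sinh (t / 4) ^ 2) - 4 / sinh t ^ 2

lemma sinhDefect_eq (t : ℝ) :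
    sinhDefect t = 1 - (1 / 4 / sinh (t / 4) ^ 2 + 4 / sinh t ^ 2) := by
  rw [sinhDefect, div_mul_eq_div_div]
  ring

lemma strictMonoOn_sinhDefect : StrictMonoOn sinhDefect (Ioi 0) := by
  intro a ha b hb hab
  have hquarter := strictAntiOn_div_sinh_sq (by norm_num : (0 : ℝ) < 1 / 4)
    (div_pos ha four_pos : 0 < a / 4) (div_pos hb four_pos : 0 < b / 4) (by linarith)
  have hfull := strictAntiOn_div_sinh_sq four_pos ha hb hab
  simp only [sinhDefect_eq]
  linarith

lemma tendsto_sinhDefect_nhdsGT_zero : Tendsto sinhDefect (𝓝[>] 0) atBot := by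
  have hquarter := (tendsto_div_sinh_sq_nhdsGT_zero (by norm_num : (0 : ℝ) < 1 / 4)).comp
    (tendsto_div_const_nhdsGT_zero four_pos)
  have hsum := hquarter.atTop_add_atTop (tendsto_div_sinh_sq_nhdsGT_zero four_pos)
  refine (tendsto_atBot_add_const_left _ 1 (tendsto_neg_atTop_atBot.comp hsum)).congr fun t => ?_
  simp [sinhDefect_eq, sub_eq_add_neg]

lemma tendsto_sinhDefect_atTop : Tendsto sinhDefect atTop (𝓝 1) := by
  have hquarter := (tendsto_div_sinh_sq_atTop (1 / 4)).comp (tendsto_id.atTop_div_const four_pos)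
  have hlim := (tendsto_const_nhds (x := (1 : ℝ))).sub
    (hquarter.add (tendsto_div_sinh_sq_atTop 4))
  simpa [funext sinhDefect_eq] using hlim

lemma continuousOn_sinhDefect : ContinuousOn sinhDefect (Ioi 0) := by
  have hquarter := (continuousOn_div_sinh_sq (1 / 4)).comp (continuousOn_id.div_const 4)
    (s := Ioi 0) fun t ht => (div_pos ht four_pos : 0 < t / 4)
  refine ((continuousOn_const (c := 1)).sub (hquarter.add (continuousOn_div_sinh_sq 4))).congr
    fun t _ => ?_
  simp [sinhDefect_eq]

theorem stmt3 :
    StrictMonoOn (fun t : ℝ => 1 - 1 / (4 * Real.sinh (t / 4) ^ 2) - 4 / Real.sinh t ^ 2)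
      (Set.Ioi 0) ∧
    Tendsto (fun t : ℝ => 1 - 1 / (4 * Real.sinh (t / 4) ^ 2) - 4 / Real.sinh t ^ 2)
      (nhdsWithin 0 (Set.Ioi 0)) atBot ∧
    Tendsto (fun t : ℝ => 1 - 1 / (4 * Real.sinh (t / 4) ^ 2) - 4 / Real.sinh t ^ 2)
      atTop (nhds 1) ∧
    ∃! t₀ : ℝ, 0 < t₀ ∧
      1 - 1 / (4 * Real.sinh (t₀ / 4) ^ 2) - 4 / Real.sinh t₀ ^ 2 = 0 := by
  refine ⟨strictMonoOn_sinhDefect, tendsto_sinhDefect_nhdsGT_zero, tendsto_sinhDefect_atTop, ?_⟩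
  obtain ⟨a, hga, ha⟩ :=
    ((tendsto_sinhDefect_nhdsGT_zero.eventually_lt_atBot 0).and self_mem_nhdsWithin).exists
  obtain ⟨b, hgb, hb⟩ :=
    ((tendsto_sinhDefect_atTop.eventually_const_lt one_pos).and (eventually_gt_atTop 0)).exists
  exact strictMonoOn_sinhDefect.existsUnique_eq_of_mem_Icc isPreconnected_Ioi
    continuousOn_sinhDefect ha hb ⟨hga.le, hgb.le⟩
end

section
/- There exists a constant K > 0 such that for all ν with 0 < ν ≤ 1/2, [log((ν^{−ν} − 1)^{1/2} + ν^{−ν/2})/(1 − ν)]² ≤ K·ν·log(1/ν). -/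
/-!
Writing `t = ν log (1/ν)`, we have `ν^{-ν} = eᵗ` and `ν^{-ν/2} = e^{t/2}`, with `0 ≤ t ≤ 1`.
Since `eᵗ - 1 ≤ t eᵗ`, the argument of the logarithm is at most `(1 + √t) e^{t/2}`, so the
logarithm is at most `√t + t/2 ≤ (3/2) √t`; dividing by `1 - ν ≥ 1/2` and squaring gives `9 t`.
-/

open Real

theorem Real.exp_sub_one_le_mul_exp (t : ℝ) : exp t - 1 ≤ t * exp t := by
  have h := add_one_le_exp (-t)
  have hmul : exp (-t) * exp t = 1 := by rw [← exp_add, neg_add_cancel, exp_zero]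
  nlinarith [exp_pos t]

theorem Real.sqrt_exp_sub_one_le (t : ℝ) : √(exp t - 1) ≤ √t * exp (t / 2) :=
  calc √(exp t - 1) ≤ √(t * exp t) := sqrt_le_sqrt (exp_sub_one_le_mul_exp t)
    _ = √t * exp (t / 2) := by rw [sqrt_mul' t (exp_pos t).le, exp_half]

theorem Real.log_sqrt_exp_sub_one_add_exp_half_le (t : ℝ) :
    log (√(exp t - 1) + exp (t / 2)) ≤ √t + t / 2 := by
  rw [log_le_iff_le_exp (by positivity), exp_add]
  calc √(exp t - 1) + exp (t / 2) ≤ (√t + 1) * exp (t / 2) := by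
        linarith [sqrt_exp_sub_one_le t]
    _ ≤ exp √t * exp (t / 2) := by gcongr; exact add_one_le_exp _

theorem Real.log_sqrt_exp_sub_one_add_exp_half_nonneg {t : ℝ} (ht : 0 ≤ t) :
    0 ≤ log (√(exp t - 1) + exp (t / 2)) :=
  log_nonneg (by linarith [sqrt_nonneg (exp t - 1), one_le_exp (by linarith : 0 ≤ t / 2)])

theorem Real.rpow_neg_eq_exp_mul_log_one_div {ν : ℝ} (hν : 0 < ν) (y : ℝ) :
    ν ^ (-y) = exp (y * log (1 / ν)) := by
  rw [rpow_def_of_pos hν, one_div, log_inv]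
  ring_nf

theorem Real.mul_log_one_div_le_one {ν : ℝ} (hν : 0 < ν) : ν * log (1 / ν) ≤ 1 := by
  have h := mul_le_mul_of_nonneg_left (log_le_sub_one_of_pos (one_div_pos.2 hν)) hν.le
  rw [mul_sub, mul_one_div_cancel hν.ne'] at h
  linarith

theorem Real.sq_sqrt_add_half_le {t : ℝ} (h₀ : 0 ≤ t) (h₁ : t ≤ 1) :
    (√t + t / 2) ^ 2 ≤ 9 / 4 * t := by
  have hs : √t ^ 2 = t := sq_sqrt h₀
  have hs₁ : √t ≤ 1 := sqrt_le_one.2 h₁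
  nlinarith [sqrt_nonneg t]

theorem stmt14 :
    ∃ K > (0 : ℝ), ∀ ν : ℝ, 0 < ν → ν ≤ 1 / 2 →
      (Real.log ((ν ^ (-ν) - 1) ^ ((1 : ℝ) / 2) + ν ^ (-(ν / 2))) / (1 - ν)) ^ 2
        ≤ K * ν * Real.log (1 / ν) := by
  refine ⟨9, by norm_num, fun ν hν hν₂ => ?_⟩
  set t := ν * log (1 / ν) with ht
  have ht₀ : 0 ≤ t := mul_nonneg hν.le (log_nonneg (by rw [le_div_iff₀ hν]; linarith))
  have hexp : ν ^ (-ν) = exp t := rpow_neg_eq_exp_mul_log_one_div hν ν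
  have hexp_half : ν ^ (-(ν / 2)) = exp (t / 2) := by
    rw [rpow_neg_eq_exp_mul_log_one_div hν, ht]; ring_nf
  rw [hexp, hexp_half, ← sqrt_eq_rpow]
  set L := log (√(exp t - 1) + exp (t / 2))
  have hL₀ : 0 ≤ L := log_sqrt_exp_sub_one_add_exp_half_nonneg ht₀
  have hdiv : L / (1 - ν) ≤ 2 * L := by
    rw [div_le_iff₀ (by linarith)]; nlinarith
  calc (L / (1 - ν)) ^ 2 ≤ (2 * L) ^ 2 := by gcongr; exact div_nonneg hL₀ (by linarith)
    _ ≤ (2 * (√t + t / 2)) ^ 2 := by gcongr; exact log_sqrt_exp_sub_one_add_exp_half_le t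
    _ ≤ 9 * t := by nlinarith [sq_sqrt_add_half_le ht₀ (mul_log_one_div_le_one hν)]
    _ = 9 * ν * log (1 / ν) := by ring
end

section
/- Let η: ℝ → (0,∞) be smooth with η' > 0 everywhere, and let r > 0. For every φ ∈ C_c^∞((−r,r)) with lim_{t→−∞} η(t) = 0, one has ∫_{−r}^{r} φ(t)² η'(t) dt ≤ 4·sup_{|t|≤r}(η(t)/η'(t))² · ∫_{−r}^{r} φ'(t)² η'(t) dt. -/
open Filter

theorem stmt16 (η : ℝ → ℝ) (hη : ContDiff ℝ (⊤ : ℕ∞) η) (hηpos : ∀ t, 0 < η t)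
    (hη' : ∀ t, 0 < deriv η t) (hlim : Tendsto η atBot (nhds 0))
    (r : ℝ) (hr : 0 < r)
    (φ : ℝ → ℝ) (hφ : ContDiff ℝ (⊤ : ℕ∞) φ) (hsupp : tsupport φ ⊆ Set.Ioo (-r) r) :
    ∫ t in (-r)..r, (φ t) ^ 2 * deriv η t
      ≤ 4 * sSup ((fun t => (η t / deriv η t) ^ 2) '' Set.Icc (-r) r)
          * ∫ t in (-r)..r, (deriv φ t) ^ 2 * deriv η t := by
  have hφc : Continuous φ := hφ.continuous
  have hφ'c : Continuous (deriv φ) := hφ.continuous_deriv (by simp)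
  have hηc : Continuous η := hη.continuous
  have hη'c : Continuous (deriv η) := hη.continuous_deriv (by simp)
  have hφd : ∀ t, HasDerivAt φ (deriv φ t) t :=
    fun t => (hφ.differentiable (by simp) t).hasDerivAt
  have hηd : ∀ t, HasDerivAt η (deriv η t) t :=
    fun t => (hη.differentiable (by simp) t).hasDerivAt
  set C := sSup ((fun t => (η t / deriv η t) ^ 2) '' Set.Icc (-r) r) with hCdef
  have hcont : Continuous fun t => (η t / deriv η t) ^ 2 :=
    (hηc.div hη'c fun t => (hη' t).ne').pow 2
  have hbdd : BddAbove ((fun t => (η t / deriv η t) ^ 2) '' Set.Icc (-r) r) :=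
    (isCompact_Icc.image hcont).bddAbove
  have hCle : ∀ t ∈ Set.Icc (-r) r, (η t / deriv η t) ^ 2 ≤ C :=
    fun t ht => le_csSup hbdd (Set.mem_image_of_mem _ ht)
  have hC0 : 0 ≤ C :=
    le_trans (sq_nonneg _) (hCle 0 ⟨by linarith, by linarith⟩)
  have hφr : φ r = 0 := by
    apply image_eq_zero_of_notMem_tsupport
    intro h
    exact absurd (hsupp h) (by simp)
  have hφnr : φ (-r) = 0 := by
    apply image_eq_zero_of_notMem_tsupport
    intro h
    exact absurd (hsupp h) (by simp)
  have h1 : IntervalIntegrable (fun t => 2 * φ t * deriv φ t * η t)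
      MeasureTheory.volume (-r) r :=
    (((continuous_const.mul hφc).mul hφ'c).mul hηc).intervalIntegrable _ _
  have h2 : IntervalIntegrable (fun t => (φ t) ^ 2 * deriv η t)
      MeasureTheory.volume (-r) r :=
    ((hφc.pow 2).mul hη'c).intervalIntegrable _ _
  have h3 : IntervalIntegrable (fun t => (deriv φ t) ^ 2 * deriv η t)
      MeasureTheory.volume (-r) r :=
    ((hφ'c.pow 2).mul hη'c).intervalIntegrable _ _
  have hIBP : ∫ t in (-r)..r,
      (2 * φ t * deriv φ t * η t + (φ t) ^ 2 * deriv η t) = 0 := by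
    have hint : IntervalIntegrable
        (fun t => 2 * φ t * deriv φ t * η t + (φ t) ^ 2 * deriv η t)
        MeasureTheory.volume (-r) r :=
      ((((continuous_const.mul hφc).mul hφ'c).mul hηc).add
        ((hφc.pow 2).mul hη'c)).intervalIntegrable _ _
    rw [intervalIntegral.integral_eq_sub_of_hasDerivAt
        (f := fun t => (φ t) ^ 2 * η t)
        (fun t _ => by
          have := ((hφd t).pow 2).mul (hηd t)
          convert this using 1
          case e'_8 => rfl
          case e'_9 =>
            change _ = ((2 : ℕ) : ℝ) * φ t ^ (2 - 1) * deriv φ t * η t + φ t ^ 2 * deriv η t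
            push_cast; ring
          case e'_4 => rfl)
        hint]
    simp [hφr, hφnr]
  rw [intervalIntegral.integral_add h1 h2] at hIBP
  -- A = -∫ 2 φ φ' η
  have hA : (∫ t in (-r)..r, (φ t) ^ 2 * deriv η t)
      = ∫ t in (-r)..r, -(2 * φ t * deriv φ t * η t) := by
    rw [intervalIntegral.integral_neg]
    linarith
  have hptwise : ∀ t ∈ Set.Icc (-r) r,
      -(2 * φ t * deriv φ t * η t)
        ≤ (1/2) * ((φ t) ^ 2 * deriv η t) + 2 * C * ((deriv φ t) ^ 2 * deriv η t) := by
    intro t ht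
    have hp : 0 < deriv η t := hη' t
    have hq : 0 < η t := hηpos t
    have hq2 : (η t) ^ 2 ≤ C * (deriv η t) ^ 2 := by
      have := hCle t ht
      rw [div_pow, div_le_iff₀ (by positivity)] at this
      linarith
    nlinarith [sq_nonneg (φ t * deriv η t + 2 * deriv φ t * η t),
      mul_le_mul_of_nonneg_left hq2 (sq_nonneg (deriv φ t)),
      mul_pos hp hp, sq_nonneg (deriv φ t * deriv η t)]
  have hmono : (∫ t in (-r)..r, -(2 * φ t * deriv φ t * η t))
      ≤ ∫ t in (-r)..r,
          ((1/2) * ((φ t) ^ 2 * deriv η t) + 2 * C * ((deriv φ t) ^ 2 * deriv η t)) := by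
    apply intervalIntegral.integral_mono_on (by linarith) h1.neg
      ((h2.const_mul _).add (h3.const_mul _)) hptwise
  rw [intervalIntegral.integral_add (h2.const_mul _) (h3.const_mul _),
    intervalIntegral.integral_const_mul, intervalIntegral.integral_const_mul] at hmono
  have hB0 : 0 ≤ ∫ t in (-r)..r, (deriv φ t) ^ 2 * deriv η t := by
    apply intervalIntegral.integral_nonneg (by linarith)
    intro t _
    exact mul_nonneg (sq_nonneg _) (hη' t).le
  nlinarith [hA, hmono]
end

section
/- Let α > 0 and let η' : ℝ → (0,∞) be a continuous function with η'(t) = e^{−α|t|} for |t| > 1. There is a constant C > 0 (independent of r) such that for all r > 1 and all φ ∈ C_c^∞((−r,r)), ∫_{−r}^{r} φ(t)² η'(t) dt ≤ C·e^{αr}·∫_{−r}^{r} φ'(t)² η'(t) dt. -/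
open MeasureTheory intervalIntegral Set Filter

/-- Cauchy–Schwarz for interval integrals of continuous nonneg functions. -/
lemma cs_interval (a b : ℝ) (hab : a ≤ b) (f g : ℝ → ℝ) (hf : Continuous f)
    (hg : Continuous g) (hf0 : ∀ t, 0 ≤ f t) (hg0 : ∀ t, 0 ≤ g t) :
    (∫ t in a..b, f t * g t) ^ 2 ≤ (∫ t in a..b, f t ^ 2) * (∫ t in a..b, g t ^ 2) := by
  set μ := volume.restrict (Set.Ioc a b) with hμ
  haveI : IsFiniteMeasure μ := ⟨by
    rw [hμ, Measure.restrict_apply_univ]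
    exact (measure_Ioc_lt_top)⟩
  have hmem : ∀ (h : ℝ → ℝ), Continuous h → MemLp h (ENNReal.ofReal 2) μ := by
    intro h hc
    obtain ⟨C, hC⟩ := (isCompact_Icc (a := a) (b := b)).exists_bound_of_continuousOn
      hc.continuousOn
    refine MemLp.of_bound hc.aestronglyMeasurable C ?_
    refine (ae_restrict_iff' measurableSet_Ioc).2 (Filter.Eventually.of_forall ?_)
    intro x hx
    exact hC x (Set.Ioc_subset_Icc_self hx)
  have hpq : (2:ℝ).HolderConjugate 2 := Real.HolderConjugate.two_two
  have key := MeasureTheory.integral_mul_le_Lp_mul_Lq_of_nonneg (μ := μ) hpq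
    (f := f) (g := g) (Filter.Eventually.of_forall hf0) (Filter.Eventually.of_forall hg0)
    (hmem f hf) (hmem g hg)
  have hif : ∫ t, f t * g t ∂μ = ∫ t in a..b, f t * g t := by
    rw [intervalIntegral.integral_of_le hab]
  have hif2 : ∫ t, f t ^ (2:ℝ) ∂μ = ∫ t in a..b, f t ^ 2 := by
    rw [intervalIntegral.integral_of_le hab]
    congr 1; funext t; rw [Real.rpow_two]
  have hig2 : ∫ t, g t ^ (2:ℝ) ∂μ = ∫ t in a..b, g t ^ 2 := by
    rw [intervalIntegral.integral_of_le hab]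
    congr 1; funext t; rw [Real.rpow_two]
  rw [hif, hif2, hig2] at key
  have hX : 0 ≤ ∫ t in a..b, f t ^ 2 :=
    intervalIntegral.integral_nonneg hab fun t _ => sq_nonneg _
  have hY : 0 ≤ ∫ t in a..b, g t ^ 2 :=
    intervalIntegral.integral_nonneg hab fun t _ => sq_nonneg _
  have h0 : 0 ≤ ∫ t in a..b, f t * g t :=
    intervalIntegral.integral_nonneg hab fun t _ => mul_nonneg (hf0 t) (hg0 t)
  calc (∫ t in a..b, f t * g t) ^ 2
      ≤ ((∫ t in a..b, f t ^ 2) ^ (1/2:ℝ) * (∫ t in a..b, g t ^ 2) ^ (1/2:ℝ)) ^ 2 := by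
        apply pow_le_pow_left₀ h0 key
    _ = (∫ t in a..b, f t ^ 2) * (∫ t in a..b, g t ^ 2) := by
        rw [mul_pow, ← Real.rpow_natCast (_ ^ (1/2:ℝ)) 2, ← Real.rpow_natCast (_ ^ (1/2:ℝ)) 2,
          ← Real.rpow_mul hX, ← Real.rpow_mul hY]
        norm_num

lemma int_exp_aux (c : ℝ) (hc : c ≠ 0) (a b : ℝ) :
    ∫ t in a..b, Real.exp (c * t) = (Real.exp (c * b) - Real.exp (c * a)) / c := by
  have hder : ∀ t ∈ Set.uIcc a b,
      HasDerivAt (fun t => Real.exp (c * t) / c) (Real.exp (c * t)) t := by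
    intro t _
    have h1 : HasDerivAt (fun t : ℝ => c * t) c t := by simpa using (hasDerivAt_id t).const_mul c
    have h2 := (h1.exp).div_const c
    rw [mul_div_cancel_right₀ _ hc] at h2
    exact h2
  have hint : IntervalIntegrable (fun t => Real.exp (c * t)) volume a b :=
    (Real.continuous_exp.comp (continuous_const.mul continuous_id)).intervalIntegrable a b
  rw [intervalIntegral.integral_eq_sub_of_hasDerivAt hder hint]
  ring

lemma eta_ext (α : ℝ) (η' : ℝ → ℝ) (hcont : Continuous η')
    (hexp : ∀ t : ℝ, 1 < |t| → η' t = Real.exp (-α * |t|)) :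
    ∀ t : ℝ, 1 ≤ |t| → η' t = Real.exp (-α * |t|) := by
  have hgc : Continuous fun s : ℝ => Real.exp (-α * |s|) :=
    Real.continuous_exp.comp (continuous_const.mul continuous_abs)
  intro t ht
  rcases eq_or_lt_of_le ht with h1 | h1
  · rcases (abs_eq (by norm_num : (0:ℝ) ≤ 1)).1 h1.symm with rfl | rfl
    · have heq : η' =ᶠ[nhdsWithin (1:ℝ) (Set.Ioi 1)] fun s => Real.exp (-α * |s|) := by
        filter_upwards [self_mem_nhdsWithin] with s hs
        exact hexp s (lt_of_lt_of_le hs (le_abs_self s))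
      have hlim1 : Filter.Tendsto (fun s => Real.exp (-α * |s|))
          (nhdsWithin (1:ℝ) (Set.Ioi 1)) (nhds (η' 1)) :=
        ((hcont.tendsto 1).mono_left nhdsWithin_le_nhds).congr' heq
      have hlim2 : Filter.Tendsto (fun s => Real.exp (-α * |s|))
          (nhdsWithin (1:ℝ) (Set.Ioi 1)) (nhds (Real.exp (-α * |(1:ℝ)|))) :=
        (hgc.tendsto 1).mono_left nhdsWithin_le_nhds
      exact tendsto_nhds_unique hlim1 hlim2
    · have heq : η' =ᶠ[nhdsWithin (-1:ℝ) (Set.Iio (-1))] fun s => Real.exp (-α * |s|) := by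
        filter_upwards [self_mem_nhdsWithin] with s hs
        refine hexp s ?_
        have : s < -1 := hs
        rw [abs_of_neg (by linarith)]
        linarith
      have hlim1 : Filter.Tendsto (fun s => Real.exp (-α * |s|))
          (nhdsWithin (-1:ℝ) (Set.Iio (-1))) (nhds (η' (-1))) :=
        ((hcont.tendsto (-1)).mono_left nhdsWithin_le_nhds).congr' heq
      have hlim2 : Filter.Tendsto (fun s => Real.exp (-α * |s|))
          (nhdsWithin (-1:ℝ) (Set.Iio (-1))) (nhds (Real.exp (-α * |(-1:ℝ)|))) :=
        (hgc.tendsto (-1)).mono_left nhdsWithin_le_nhds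
      exact tendsto_nhds_unique hlim1 hlim2
  · exact hexp t h1

theorem stmt17 (α : ℝ) (hα : 0 < α) (η' : ℝ → ℝ) (hcont : Continuous η')
    (hpos : ∀ t, 0 < η' t)
    (hexp : ∀ t : ℝ, 1 < |t| → η' t = Real.exp (-α * |t|)) :
    ∃ C > (0 : ℝ), ∀ r > (1 : ℝ), ∀ φ : ℝ → ℝ, ContDiff ℝ (⊤ : ℕ∞) φ →
      tsupport φ ⊆ Set.Ioo (-r) r →
      ∫ t in (-r)..r, (φ t) ^ 2 * η' t
        ≤ C * Real.exp (α * r) * ∫ t in (-r)..r, (deriv φ t) ^ 2 * η' t := by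
  have heta := eta_ext α η' hcont hexp
  have hinvc : Continuous fun t => (η' t)⁻¹ := hcont.inv₀ fun t => (hpos t).ne'
  set K1 : ℝ := ∫ t in (-1:ℝ)..1, η' t with hK1
  set K2 : ℝ := ∫ t in (-1:ℝ)..1, (η' t)⁻¹ with hK2
  have hK1nn : 0 ≤ K1 :=
    intervalIntegral.integral_nonneg (by norm_num) fun t _ => (hpos t).le
  have hK2nn : 0 ≤ K2 :=
    intervalIntegral.integral_nonneg (by norm_num) fun t _ => (inv_pos.2 (hpos t)).le
  refine ⟨(K1 + 2/α) * (K2 + 2/α), by positivity, ?_⟩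
  intro r hr φ hφ hsupp
  have hrr : -r ≤ r := by linarith
  have hr1 : -r ≤ -1 := by linarith
  have h1r : (1:ℝ) ≤ r := hr.le
  have hφc : Continuous φ := hφ.continuous
  have hφ'c : Continuous (deriv φ) := hφ.continuous_deriv (by simp)
  -- the weight integrals
  have hIη : ∫ t in (-r)..r, η' t ≤ K1 + 2/α := by
    have e1 : ∫ t in (-r)..(-1:ℝ), η' t = (Real.exp (α * (-1)) - Real.exp (α * (-r))) / α := by
      rw [intervalIntegral.integral_congr (g := fun t => Real.exp (α * t)) ?_,
        int_exp_aux α hα.ne']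
      intro t htmem
      rw [Set.uIcc_of_le hr1] at htmem
      have h2 : t ≤ -1 := htmem.2
      rw [heta t (by rw [abs_of_neg (by linarith)]; linarith), abs_of_neg (by linarith)]
      ring_nf
    have e3 : ∫ t in (1:ℝ)..r, η' t = (Real.exp (-α * r) - Real.exp (-α * 1)) / (-α) := by
      rw [intervalIntegral.integral_congr (g := fun t => Real.exp (-α * t)) ?_,
        int_exp_aux (-α) (by simpa using hα.ne')]
      intro t htmem
      rw [Set.uIcc_of_le h1r] at htmem
      have h2 : 1 ≤ t := htmem.1
      rw [heta t (by rw [abs_of_pos (by linarith)]; linarith), abs_of_pos (by linarith)]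
    have hsplit1 : (∫ t in (-1:ℝ)..1, η' t) + ∫ t in (1:ℝ)..r, η' t
        = ∫ t in (-1:ℝ)..r, η' t :=
      intervalIntegral.integral_add_adjacent_intervals (hcont.intervalIntegrable _ _)
        (hcont.intervalIntegrable _ _)
    have hsplit2 : (∫ t in (-r)..(-1:ℝ), η' t) + ∫ t in (-1:ℝ)..r, η' t
        = ∫ t in (-r)..r, η' t :=
      intervalIntegral.integral_add_adjacent_intervals (hcont.intervalIntegrable _ _)
        (hcont.intervalIntegrable _ _)
    have hb1 : (Real.exp (α * (-1)) - Real.exp (α * (-r))) / α ≤ 1/α := by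
      gcongr
      have := Real.exp_pos (α * (-r))
      have : Real.exp (α * (-1)) ≤ 1 := Real.exp_le_one_iff.2 (by nlinarith)
      linarith [Real.exp_pos (α * (-r))]
    have hb3 : (Real.exp (-α * r) - Real.exp (-α * 1)) / (-α) ≤ 1/α := by
      rw [div_neg, ← neg_sub, neg_div, neg_neg]
      gcongr
      have : Real.exp (-α * 1) ≤ 1 := Real.exp_le_one_iff.2 (by nlinarith)
      linarith [Real.exp_pos (-α * r)]
    have : ∫ t in (-r)..r, η' t
        = (∫ t in (-r)..(-1:ℝ), η' t) + K1 + ∫ t in (1:ℝ)..r, η' t := by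
      rw [← hsplit2, ← hsplit1, hK1]; ring
    rw [this, e1, e3]
    have h2a : (2:ℝ)/α = 1/α + 1/α := by ring
    rw [h2a]
    linarith
  have hIinv : ∫ t in (-r)..r, (η' t)⁻¹ ≤ (K2 + 2/α) * Real.exp (α * r) := by
    have e1 : ∫ t in (-r)..(-1:ℝ), (η' t)⁻¹
        = (Real.exp (-α * (-1)) - Real.exp (-α * (-r))) / (-α) := by
      rw [intervalIntegral.integral_congr (g := fun t => Real.exp (-α * t)) ?_,
        int_exp_aux (-α) (by simpa using hα.ne')]
      intro t htmem
      rw [Set.uIcc_of_le hr1] at htmem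
      have h2 : t ≤ -1 := htmem.2
      show (η' t)⁻¹ = Real.exp (-α * t)
      rw [heta t (by rw [abs_of_neg (by linarith)]; linarith), abs_of_neg (by linarith),
        ← Real.exp_neg]
      ring_nf
    have e3 : ∫ t in (1:ℝ)..r, (η' t)⁻¹ = (Real.exp (α * r) - Real.exp (α * 1)) / α := by
      rw [intervalIntegral.integral_congr (g := fun t => Real.exp (α * t)) ?_,
        int_exp_aux α hα.ne']
      intro t htmem
      rw [Set.uIcc_of_le h1r] at htmem
      have h2 : 1 ≤ t := htmem.1
      show (η' t)⁻¹ = Real.exp (α * t)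
      rw [heta t (by rw [abs_of_pos (by linarith)]; linarith), abs_of_pos (by linarith),
        ← Real.exp_neg]
      ring_nf
    have hsplit1 : (∫ t in (-1:ℝ)..1, (η' t)⁻¹) + ∫ t in (1:ℝ)..r, (η' t)⁻¹
        = ∫ t in (-1:ℝ)..r, (η' t)⁻¹ :=
      intervalIntegral.integral_add_adjacent_intervals (hinvc.intervalIntegrable _ _)
        (hinvc.intervalIntegrable _ _)
    have hsplit2 : (∫ t in (-r)..(-1:ℝ), (η' t)⁻¹) + ∫ t in (-1:ℝ)..r, (η' t)⁻¹
        = ∫ t in (-r)..r, (η' t)⁻¹ :=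
      intervalIntegral.integral_add_adjacent_intervals (hinvc.intervalIntegrable _ _)
        (hinvc.intervalIntegrable _ _)
    have hone : (1:ℝ) ≤ Real.exp (α * r) := Real.one_le_exp (by positivity)
    have hb1 : (Real.exp (-α * (-1)) - Real.exp (-α * (-r))) / (-α)
        ≤ Real.exp (α * r) / α := by
      rw [div_neg, ← neg_sub, neg_div, neg_neg]
      gcongr
      have h1 : Real.exp (-α * (-r)) = Real.exp (α * r) := by ring_nf
      have h2 : 0 < Real.exp (-α * (-1)) := Real.exp_pos _
      linarith [h1 ▸ le_refl (Real.exp (-α * (-r)))]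
    have hb3 : (Real.exp (α * r) - Real.exp (α * 1)) / α ≤ Real.exp (α * r) / α := by
      gcongr
      linarith [Real.exp_pos (α * 1)]
    have hthis : ∫ t in (-r)..r, (η' t)⁻¹
        = (∫ t in (-r)..(-1:ℝ), (η' t)⁻¹) + K2 + ∫ t in (1:ℝ)..r, (η' t)⁻¹ := by
      rw [← hsplit2, ← hsplit1, hK2]; ring
    have hK2e : K2 ≤ K2 * Real.exp (α * r) := le_mul_of_one_le_right hK2nn hone
    rw [hthis, e1, e3]
    have expand : (K2 + 2/α) * Real.exp (α * r)
        = K2 * Real.exp (α * r) + Real.exp (α * r)/α + Real.exp (α * r)/α := by ring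
    rw [expand]
    linarith
  -- φ vanishes at -r
  have hφ0 : φ (-r) = 0 := by
    apply image_eq_zero_of_notMem_tsupport
    intro hmem
    exact absurd (hsupp hmem).1 (lt_irrefl _)
  set S : ℝ := ∫ t in (-r)..r, |deriv φ t| with hS
  set A : ℝ := ∫ t in (-r)..r, (deriv φ t) ^ 2 * η' t with hA
  have hA0 : 0 ≤ A :=
    intervalIntegral.integral_nonneg hrr fun t _ => mul_nonneg (sq_nonneg _) (hpos t).le
  -- sup bound
  have hsup : ∀ t ∈ Set.Icc (-r) r, φ t ^ 2 ≤ S ^ 2 := by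
    intro t ht
    have hft : φ t = ∫ s in (-r)..t, deriv φ s := by
      rw [intervalIntegral.integral_deriv_eq_sub
        (fun x _ => (hφ.differentiable (by simp)).differentiableAt)
        (hφ'c.intervalIntegrable _ _), hφ0, sub_zero]
    have habs : |φ t| ≤ S := by
      rw [hft]
      calc |∫ s in (-r)..t, deriv φ s| ≤ ∫ s in (-r)..t, |deriv φ s| :=
            intervalIntegral.abs_integral_le_integral_abs ht.1
        _ ≤ S :=
            intervalIntegral.integral_mono_interval le_rfl ht.1 ht.2
              (Filter.Eventually.of_forall fun s => abs_nonneg _)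
              (hφ'c.abs.intervalIntegrable _ _)
    calc φ t ^ 2 = |φ t| ^ 2 := (sq_abs _).symm
      _ ≤ S ^ 2 := pow_le_pow_left₀ (abs_nonneg _) habs 2
  -- Cauchy–Schwarz
  have hCS : S ^ 2 ≤ A * ∫ t in (-r)..r, (η' t)⁻¹ := by
    have hfc : Continuous fun t => |deriv φ t| * Real.sqrt (η' t) :=
      hφ'c.abs.mul (hcont.sqrt)
    have hgc : Continuous fun t => (Real.sqrt (η' t))⁻¹ :=
      (hcont.sqrt).inv₀ fun t => (Real.sqrt_pos.2 (hpos t)).ne'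
    have hkey := cs_interval (-r) r hrr _ _ hfc hgc
      (fun t => mul_nonneg (abs_nonneg _) (Real.sqrt_nonneg _))
      (fun t => inv_nonneg.2 (Real.sqrt_nonneg _))
    have hprod : ∀ t : ℝ, |deriv φ t| * Real.sqrt (η' t) * (Real.sqrt (η' t))⁻¹
        = |deriv φ t| := by
      intro t
      have : Real.sqrt (η' t) ≠ 0 := (Real.sqrt_pos.2 (hpos t)).ne'
      field_simp
    have hsq1 : ∀ t : ℝ, (|deriv φ t| * Real.sqrt (η' t)) ^ 2 = (deriv φ t) ^ 2 * η' t := by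
      intro t
      rw [mul_pow, sq_abs, Real.sq_sqrt (hpos t).le]
    have hsq2 : ∀ t : ℝ, ((Real.sqrt (η' t))⁻¹) ^ 2 = (η' t)⁻¹ := by
      intro t
      rw [inv_pow, Real.sq_sqrt (hpos t).le]
    have r1 : (∫ t in (-r)..r, (fun t => |deriv φ t| * Real.sqrt (η' t)) t
        * (fun t => (Real.sqrt (η' t))⁻¹) t) = S := by
      rw [hS]; apply intervalIntegral.integral_congr; intro t _; exact hprod t
    have r2 : (∫ t in (-r)..r, (fun t => |deriv φ t| * Real.sqrt (η' t)) t ^ 2) = A := by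
      rw [hA]; apply intervalIntegral.integral_congr; intro t _; exact hsq1 t
    have r3 : (∫ t in (-r)..r, (fun t => (Real.sqrt (η' t))⁻¹) t ^ 2)
        = ∫ t in (-r)..r, (η' t)⁻¹ := by
      apply intervalIntegral.integral_congr; intro t _; exact hsq2 t
    rw [r1, r2, r3] at hkey
    exact hkey
  -- main chain
  have hintφ : IntervalIntegrable (fun t => φ t ^ 2 * η' t) volume (-r) r :=
    ((hφc.pow 2).mul hcont).intervalIntegrable _ _
  have hintS : IntervalIntegrable (fun t => S ^ 2 * η' t) volume (-r) r :=
    (continuous_const.mul hcont).intervalIntegrable _ _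
  have h1 : ∫ t in (-r)..r, φ t ^ 2 * η' t ≤ ∫ t in (-r)..r, S ^ 2 * η' t :=
    intervalIntegral.integral_mono_on hrr hintφ hintS fun t ht =>
      mul_le_mul_of_nonneg_right (hsup t ht) (hpos t).le
  have h2 : ∫ t in (-r)..r, S ^ 2 * η' t = S ^ 2 * ∫ t in (-r)..r, η' t := by
    rw [intervalIntegral.integral_const_mul]
  have hM0 : 0 ≤ ∫ t in (-r)..r, η' t :=
    intervalIntegral.integral_nonneg hrr fun t _ => (hpos t).le
  have hB0 : 0 ≤ ∫ t in (-r)..r, (η' t)⁻¹ :=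
    intervalIntegral.integral_nonneg hrr fun t _ => (inv_pos.2 (hpos t)).le
  calc ∫ t in (-r)..r, φ t ^ 2 * η' t
      ≤ S ^ 2 * ∫ t in (-r)..r, η' t := by rw [← h2]; exact h1
    _ ≤ (A * ∫ t in (-r)..r, (η' t)⁻¹) * ∫ t in (-r)..r, η' t :=
        mul_le_mul_of_nonneg_right hCS hM0
    _ ≤ (A * ((K2 + 2/α) * Real.exp (α * r))) * (K1 + 2/α) := by
        apply mul_le_mul (mul_le_mul_of_nonneg_left hIinv hA0) hIη hM0
        exact mul_nonneg hA0 (by positivity)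
    _ = (K1 + 2/α) * (K2 + 2/α) * Real.exp (α * r) * A := by ring
end
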